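/- Let (W,S) be an irreducible Coxeter system with connected Coxeter graph, and let K ⊆ Q̂ be a nonempty W-invariant subset under the normalized action. Then for every simple root α ∈ Δ there exists x_α ∈ K with s_α · x_α ≠ x_α (equivalently, B(x_α, α) ≠ 0). -/

import Mathlib

/-!
Since `B` has at most one non-positive eigendirection and the `μ`-eigenvector `o` spans it, `B` is
positive definite on `o⊥`: a `B`-isotropic vector orthogonal to `o` vanishes. Hence the reflection
`s_j x = x - 2 B(x, α_j) α_j` of an isotropic `x` with `B(x, α_j) ≠ 0` has nonzero `o`-coordinate
and can be normalized back into `K`. If moreover `B(x, α_k) = 0` for a neighbour `k` of `j`, then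
`B(s_j x, α_k) = -2 B(x, α_j) B(α_k, α_j) ≠ 0`. Some point of `K` is not `B`-orthogonal to every
simple root (as `B(x, o) = μ ≠ 0`), and the property spreads along the connected Coxeter graph.
-/

open Matrix

lemma SimpleGraph.Reachable.imp_of_adj {V : Type*} {G : SimpleGraph V} {P : V → Prop}
    (hP : ∀ a b, G.Adj a b → P a → P b) {u v : V} (h : G.Reachable u v) : P u → P v := by
  intro hu
  rw [reachable_iff_reflTransGen] at h
  induction h with
  | refl => exact hu
  | tail _ hadj ih => exact hP _ _ hadj ih

lemma exists_forall_ne_pos_of_card_filter_pos {ι : Type*} [Fintype ι] [Nonempty ι] (f : ι → ℝ)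
    (h : (Finset.univ.filter (fun k => 0 < f k)).card = Fintype.card ι - 1) :
    ∃ k₀, ∀ k ≠ k₀, 0 < f k := by
  have hcard : (Finset.univ.filter (fun k => ¬ 0 < f k)).card ≤ 1 := by
    have := Finset.card_filter_add_card_filter_not (s := Finset.univ) (fun k => 0 < f k)
    rw [Finset.card_univ] at this
    omega
  obtain ⟨k₀, hk₀⟩ := Finset.card_le_one_iff_subset_singleton.mp hcard
  refine ⟨k₀, fun k hk => ?_⟩
  by_contra hfk
  exact hk (Finset.mem_singleton.mp (hk₀ (by simpa using hfk)))

namespace Matrix.IsHermitian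

variable {ι : Type*} [Fintype ι] [DecidableEq ι] {A : Matrix ι ι ℝ} (hA : A.IsHermitian)

lemma dotProduct_eq_sum_eigenvectorBasis (x y : ι → ℝ) :
    x ⬝ᵥ y = ∑ k, (⇑(hA.eigenvectorBasis k) ⬝ᵥ x) * (⇑(hA.eigenvectorBasis k) ⬝ᵥ y) := by
  have := (hA.eigenvectorBasis).sum_inner_mul_inner (WithLp.toLp 2 x) (WithLp.toLp 2 y)
  simp only [EuclideanSpace.inner_eq_star_dotProduct] at this
  simpa [dotProduct_comm] using this.symm

lemma eigenvectorBasis_dotProduct_mulVec (k : ι) (x : ι → ℝ) :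
    ⇑(hA.eigenvectorBasis k) ⬝ᵥ A *ᵥ x = hA.eigenvalues k * (⇑(hA.eigenvectorBasis k) ⬝ᵥ x) := by
  have h := dotProduct_transpose_mulVec A x (hA.eigenvectorBasis k)
  rw [(isHermitian_iff_isSymm.mp hA).eq, hA.mulVec_eigenvectorBasis] at h
  rw [← h, dotProduct_smul, smul_eq_mul, dotProduct_comm]

lemma dotProduct_mulVec_self_eq_sum (x : ι → ℝ) :
    x ⬝ᵥ A *ᵥ x = ∑ k, hA.eigenvalues k * (⇑(hA.eigenvectorBasis k) ⬝ᵥ x) ^ 2 := by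
  rw [hA.dotProduct_eq_sum_eigenvectorBasis]
  refine Finset.sum_congr rfl fun k _ => ?_
  rw [hA.eigenvectorBasis_dotProduct_mulVec]
  ring

lemma eigenvectorBasis_dotProduct_eq_zero {o : ι → ℝ} {μ : ℝ} (ho : A *ᵥ o = μ • o) {k : ι}
    (hk : hA.eigenvalues k ≠ μ) : ⇑(hA.eigenvectorBasis k) ⬝ᵥ o = 0 := by
  have h := hA.eigenvectorBasis_dotProduct_mulVec k o
  rw [ho, dotProduct_smul, smul_eq_mul] at h
  exact (mul_eq_mul_right_iff.mp h).resolve_left (Ne.symm hk)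

lemma eq_zero_of_dotProduct_mulVec_self_nonpos {k₀ : ι} (hpos : ∀ k ≠ k₀, 0 < hA.eigenvalues k)
    {o : ι → ℝ} {μ : ℝ} (hμ : μ ≤ 0) (ho : A *ᵥ o = μ • o) (ho0 : o ≠ 0) {z : ι → ℝ}
    (hz : z ⬝ᵥ A *ᵥ z ≤ 0) (hzo : z ⬝ᵥ o = 0) : z = 0 := by
  set c : ι → ℝ := fun k => ⇑(hA.eigenvectorBasis k) ⬝ᵥ z
  set d : ι → ℝ := fun k => ⇑(hA.eigenvectorBasis k) ⬝ᵥ o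
  have hd : ∀ k ≠ k₀, d k = 0 := fun k hk =>
    hA.eigenvectorBasis_dotProduct_eq_zero ho ((hpos k hk).trans_le' hμ).ne'
  have hdot_o : ∀ x : ι → ℝ, x ⬝ᵥ o = (⇑(hA.eigenvectorBasis k₀) ⬝ᵥ x) * d k₀ := fun x => by
    rw [hA.dotProduct_eq_sum_eigenvectorBasis, Finset.sum_eq_single k₀ (fun k _ hk =>
      mul_eq_zero_of_right _ (hd k hk)) (by simp)]
  have hdk₀ : d k₀ ≠ 0 := fun h =>
    ho0 (dotProduct_self_eq_zero.mp (by rw [hdot_o, h, mul_zero]))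
  have hck₀ : c k₀ = 0 := by
    rw [hdot_o] at hzo
    exact (mul_eq_zero.mp hzo).resolve_right hdk₀
  have hterm_nonneg : ∀ k, 0 ≤ hA.eigenvalues k * c k ^ 2 := fun k => by
    rcases eq_or_ne k k₀ with rfl | hk
    · simp [hck₀]
    · exact mul_nonneg (hpos k hk).le (sq_nonneg _)
  have hterm_zero : ∀ k, hA.eigenvalues k * c k ^ 2 = 0 := by
    have hsum : ∑ k, hA.eigenvalues k * c k ^ 2 = 0 :=
      le_antisymm ((hA.dotProduct_mulVec_self_eq_sum z).symm.trans_le hz)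
        (Finset.sum_nonneg fun k _ => hterm_nonneg k)
    exact fun k => (Finset.sum_eq_zero_iff_of_nonneg fun k _ => hterm_nonneg k).mp hsum k
      (Finset.mem_univ k)
  have hc : ∀ k, c k = 0 := fun k => by
    rcases eq_or_ne k k₀ with rfl | hk
    · exact hck₀
    · exact pow_eq_zero_iff two_ne_zero |>.mp
        ((mul_eq_zero.mp (hterm_zero k)).resolve_left (hpos k hk).ne')
  refine dotProduct_self_eq_zero.mp ?_
  rw [hA.dotProduct_eq_sum_eigenvectorBasis]
  exact Finset.sum_eq_zero fun k _ => mul_self_eq_zero.mpr (hc k)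

end Matrix.IsHermitian

section CoxeterReflection

variable {ι : Type*} [Fintype ι] [DecidableEq ι] (B : Matrix ι ι ℝ)

noncomputable def coxeterReflection (j : ι) (x : ι → ℝ) : ι → ℝ :=
  x - (2 * (B *ᵥ x) j) • Pi.single j 1

variable {B}

lemma mulVec_coxeterReflection_apply (j k : ι) (x : ι → ℝ) :
    (B *ᵥ coxeterReflection B j x) k = (B *ᵥ x) k - 2 * (B *ᵥ x) j * B k j := by
  simp [coxeterReflection, mulVec_sub, mulVec_smul]

lemma coxeterReflection_involutive {j : ι} (hjj : B j j = 1) :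
    Function.Involutive (coxeterReflection B j) := fun x => by
  rw [coxeterReflection, mulVec_coxeterReflection_apply, hjj, coxeterReflection]
  module

lemma dotProduct_mulVec_coxeterReflection (hB : B.IsSymm) {j : ι} (hjj : B j j = 1)
    (x : ι → ℝ) :
    coxeterReflection B j x ⬝ᵥ B *ᵥ coxeterReflection B j x = x ⬝ᵥ B *ᵥ x := by
  have hxe : x ⬝ᵥ B.col j = (B *ᵥ x) j := by
    rw [← mulVec_single_one, ← dotProduct_transpose_mulVec, hB.eq, single_one_dotProduct]
  simp only [coxeterReflection, mulVec_sub, mulVec_smul, sub_dotProduct, dotProduct_sub,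
    smul_dotProduct, dotProduct_smul, hxe, single_one_dotProduct, mulVec_single_one, col_apply,
    hjj, smul_eq_mul]
  ring

end CoxeterReflection

lemma exists_mem_mulVec_apply_ne_zero_of_adj {ι : Type*} [Fintype ι] [DecidableEq ι]
    {B : Matrix ι ι ℝ} (hB : B.IsSymm) {o : ι → ℝ} {K : Set (ι → ℝ)} {j k : ι}
    (hjj : B j j = 1) (hkj : B k j ≠ 0)
    (hanis : ∀ z, z ⬝ᵥ B *ᵥ z = 0 → z ⬝ᵥ o = 0 → z = 0)
    (hKQ : ∀ x ∈ K, x ⬝ᵥ B *ᵥ x = 0)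
    (hKinv : ∀ x ∈ K, (coxeterReflection B j x ⬝ᵥ o)⁻¹ • coxeterReflection B j x ∈ K)
    (h : ∃ x ∈ K, (B *ᵥ x) j ≠ 0) : ∃ x ∈ K, (B *ᵥ x) k ≠ 0 := by
  obtain ⟨x, hxK, hxj⟩ := h
  rcases ne_or_eq ((B *ᵥ x) k) 0 with hxk | hxk
  · exact ⟨x, hxK, hxk⟩
  have hsx : coxeterReflection B j x ≠ 0 := fun h0 => hxj <| by
    rw [← coxeterReflection_involutive hjj x, h0]
    simp [coxeterReflection]
  have hsxo : coxeterReflection B j x ⬝ᵥ o ≠ 0 := fun h0 =>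
    hsx (hanis _ (by rw [dotProduct_mulVec_coxeterReflection hB hjj, hKQ x hxK]) h0)
  refine ⟨_, hKinv x hxK, ?_⟩
  rw [mulVec_smul, Pi.smul_apply, smul_eq_mul, mulVec_coxeterReflection_apply, hxk, zero_sub]
  exact mul_ne_zero (inv_ne_zero hsxo)
    (neg_ne_zero.mpr (mul_ne_zero (mul_ne_zero two_ne_zero hxj) hkj))

theorem stmt14_general (n : ℕ) (B : Matrix (Fin n) (Fin n) ℝ) (hB : B.IsHermitian)
    (hdiag : ∀ i, B i i = 1)
    (hconn : (SimpleGraph.fromRel (fun i j : Fin n => B i j ≠ 0)).Connected)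
    (hpos : (Finset.univ.filter (fun i => 0 < hB.eigenvalues i)).card = n - 1)
    (o : Fin n → ℝ) (μ : ℝ) (hμ : μ < 0) (ho : B.mulVec o = μ • o)
    (honorm : o ⬝ᵥ o = 1)
    (K : Set (Fin n → ℝ))
    (hKQ : ∀ x ∈ K, x ⬝ᵥ B.mulVec x = 0 ∧ x ⬝ᵥ o = 1)
    (hKne : K.Nonempty)
    (hKinv : ∀ (j : Fin n), ∀ x ∈ K,
      (((x - (2 * B.mulVec x j) • (Pi.single j (1:ℝ) : Fin n → ℝ)) ⬝ᵥ o)⁻¹ •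
        (x - (2 * B.mulVec x j) • (Pi.single j (1:ℝ) : Fin n → ℝ))) ∈ K)
    (i : Fin n) :
    ∃ x ∈ K, B.mulVec x i ≠ 0 := by
  have hsymm : B.IsSymm := isHermitian_iff_isSymm.mp hB
  have : Nonempty (Fin n) := ⟨i⟩
  obtain ⟨k₀, hk₀⟩ := exists_forall_ne_pos_of_card_filter_pos hB.eigenvalues (by simpa using hpos)
  have ho0 : o ≠ 0 := by
    rintro rfl
    simp at honorm
  have hanis : ∀ z, z ⬝ᵥ B *ᵥ z = 0 → z ⬝ᵥ o = 0 → z = 0 := fun z hz hzo =>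
    hB.eq_zero_of_dotProduct_mulVec_self_nonpos hk₀ hμ.le ho ho0 hz.le hzo
  obtain ⟨x₀, hx₀⟩ := hKne
  have hBx₀ : B *ᵥ x₀ ≠ 0 := by
    intro h
    have := dotProduct_transpose_mulVec B o x₀
    rw [hsymm.eq, h, ho, dotProduct_zero, dotProduct_smul, (hKQ x₀ hx₀).2, smul_eq_mul,
      mul_one] at this
    exact hμ.ne this.symm
  obtain ⟨j₀, hj₀⟩ := Function.ne_iff.mp hBx₀
  refine (hconn.preconnected j₀ i).imp_of_adj (P := fun j => ∃ x ∈ K, (B *ᵥ x) j ≠ 0)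
    (fun j k hjk => ?_) ⟨x₀, hx₀, hj₀⟩
  have hkj : B k j ≠ 0 := by
    rcases ((SimpleGraph.fromRel_adj _ j k).mp hjk).2 with h | h
    · rwa [hsymm.apply]
    · exact h
  exact exists_mem_mulVec_apply_ne_zero_of_adj hsymm (hdiag j) hkj hanis
    (fun x hx => (hKQ x hx).1) (hKinv j)

/-- For an irreducible Coxeter system (connected Coxeter graph), any
nonempty subset `K ⊆ Q̂` invariant under every normalized simple reflection contains,
for each simple root `αᵢ`, a point not fixed by `s_{αᵢ}` (i.e. with `B(x, αᵢ) ≠ 0`). -/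
theorem stmt14 (n : ℕ) (B : Matrix (Fin n) (Fin n) ℝ) (hB : B.IsHermitian)
    (hdiag : ∀ i, B i i = 1)
    (hoff : ∀ i j, i ≠ j → B i j ≤ 0)
    (hconn : (SimpleGraph.fromRel (fun i j : Fin n => B i j ≠ 0)).Connected)
    (hneg : (Finset.univ.filter (fun i => hB.eigenvalues i < 0)).card = 1)
    (hpos : (Finset.univ.filter (fun i => 0 < hB.eigenvalues i)).card = n - 1)
    (o : Fin n → ℝ) (μ : ℝ) (hμ : μ < 0) (ho : B.mulVec o = μ • o)
    (honorm : o ⬝ᵥ o = 1)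
    (K : Set (Fin n → ℝ))
    (hKQ : ∀ x ∈ K, x ⬝ᵥ B.mulVec x = 0 ∧ x ⬝ᵥ o = 1)
    (hKne : K.Nonempty)
    (hKinv : ∀ (j : Fin n), ∀ x ∈ K,
      (((x - (2 * B.mulVec x j) • (Pi.single j (1:ℝ) : Fin n → ℝ)) ⬝ᵥ o)⁻¹ •
        (x - (2 * B.mulVec x j) • (Pi.single j (1:ℝ) : Fin n → ℝ))) ∈ K)
    (i : Fin n) :
    ∃ x ∈ K, B.mulVec x i ≠ 0 :=
  stmt14_general n B hB hdiag hconn hpos o μ hμ ho honorm K hKQ hKne hKinv i
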